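/- Let G be a simple graph, let C be a cycle in G, let e = {u, v} be an edge of C, and let P be a path in G from u to v of length at least 2 whose internal vertices are all disjoint from the vertices of C. Then there exists a cycle C' in G whose vertex set equals the union of the vertex set of C and the vertex set of P, and whose edge set equals the union of the edge set of P with the edge set of C minus e. (This is the correctness of one iteration of the Expansion Algorithm: σ_{i+1} := σ_i + P − e is again a cycle.) -/

import Mathlib

/-!
Rotating `C` to start at `u` and, if needed, reversing it, we may assume that `C` is the edge
`u → v` followed by a path `Q` from `v` back to `u`. The new cycle is `P` followed by `Q`:
both are paths, they meet only in `u` and `v`, and `P` has length at least 2, so the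
concatenation is a cycle in which the edge `s(u, v)` has been traded for the edges of `P`.
-/

namespace SimpleGraph.Walk

variable {V : Type*} {G : SimpleGraph V}

lemma IsPath.dart_fst_ne_of_mem_darts {a b : V} {p : G.Walk a b} (hp : p.IsPath) {d : G.Dart}
    (hd : d ∈ p.darts) : d.fst ≠ b := by
  have hmem : d.symm.snd ∈ p.reverse.support.tail :=
    p.reverse.map_snd_darts ▸ List.mem_map_of_mem (mem_darts_reverse.mpr hd)
  have hnodup := hp.reverse.support_nodup
  rw [← cons_tail_support, List.nodup_cons] at hnodup
  exact fun h => hnodup.1 (h ▸ hmem)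

lemma IsCycle.eq_cons_of_mem_darts {u v : V} {D : G.Walk u u} (hD : D.IsCycle) {h : G.Adj u v}
    (hd : ⟨(u, v), h⟩ ∈ D.darts) : ∃ Q : G.Walk v u, D = cons h Q := by
  cases D with
  | nil => simp at hd
  | cons h' Q =>
    rcases List.mem_cons.mp hd with hd | hd
    · obtain rfl := congrArg (·.snd) hd
      exact ⟨Q, rfl⟩
    · exact absurd rfl (((cons_isCycle_iff _ _).mp hD).1.dart_fst_ne_of_mem_darts hd)

lemma IsCycle.exists_cons_eq_or_reverse_eq {u v : V} {D : G.Walk u u} (hD : D.IsCycle)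
    (he : s(u, v) ∈ D.edges) :
    ∃ (h : G.Adj u v) (Q : G.Walk v u), D = cons h Q ∨ D.reverse = cons h Q := by
  obtain ⟨⟨⟨a, b⟩, hab⟩, hd, hde⟩ := List.mem_map.mp he
  rcases Sym2.eq_iff.mp hde with ⟨rfl, rfl⟩ | ⟨rfl, rfl⟩
  · obtain ⟨Q, hQ⟩ := hD.eq_cons_of_mem_darts hd
    exact ⟨hab, Q, .inl hQ⟩
  · obtain ⟨Q, hQ⟩ := hD.reverse.eq_cons_of_mem_darts (h := hab.symm)
      (mem_darts_reverse.mpr hd)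
    exact ⟨hab.symm, Q, .inr hQ⟩

lemma IsCycle.exists_cons_of_mem_edges {x u v : V} {C : G.Walk x x} (hC : C.IsCycle)
    (he : s(u, v) ∈ C.edges) :
    ∃ (h : G.Adj u v) (Q : G.Walk v u), (cons h Q).IsCycle ∧
      {w | w ∈ (cons h Q).support} = {w | w ∈ C.support} ∧
      {e | e ∈ (cons h Q).edges} = {e | e ∈ C.edges} := by
  classical
  have hu := C.fst_mem_support_of_mem_edges he
  obtain ⟨h, Q, hQ | hQ⟩ := (hC.rotate hu).exists_cons_eq_or_reverse_eq
    ((C.rotate_edges u hu).mem_iff.mpr he)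
  all_goals
    refine ⟨h, Q, hQ ▸ by simpa using hC.rotate hu, ?_, ?_⟩ <;> ext <;>
      simp [← hQ, mem_support_rotate_iff, (C.rotate_edges u hu).mem_iff]

section Splice

variable {a b : V} {Q : G.Walk b a} {P : G.Walk a b}

lemma IsPath.isCycle_append_of_isCycle_cons {h : G.Adj a b} (hC : (cons h Q).IsCycle)
    (hP : P.IsPath) (hlen : 2 ≤ P.length)
    (hcommon : ∀ w ∈ P.support, w ∈ Q.support → w = a ∨ w = b) :
    (P.append Q).IsCycle := by
  have hQ : Q.IsPath := ((cons_isCycle_iff _ _).mp hC).1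
  refine hP.isCycle_append hQ (List.disjoint_left.mpr fun w hwP hwQ => ?_) (.inl hlen)
  have hPnodup := P.cons_tail_support ▸ hP.support_nodup
  have hQnodup := Q.cons_tail_support ▸ hQ.support_nodup
  rcases hcommon w (List.mem_of_mem_tail hwP) (List.mem_of_mem_tail hwQ) with rfl | rfl
  · exact (List.nodup_cons.mp hPnodup).1 hwP
  · exact (List.nodup_cons.mp hQnodup).1 hwQ

lemma setOf_mem_support_append_eq (h : G.Adj a b) :
    {w | w ∈ (P.append Q).support} =
      {w | w ∈ (cons h Q).support} ∪ {w | w ∈ P.support} := by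
  ext w
  simp only [Set.mem_ofPred_eq, Set.mem_union, mem_support_append_iff, support_cons,
    List.mem_cons]
  grind [P.start_mem_support]

lemma setOf_mem_edges_append_eq {h : G.Adj a b} (hC : (cons h Q).IsCycle) :
    {e | e ∈ (P.append Q).edges} =
      {e | e ∈ P.edges} ∪ ({e | e ∈ (cons h Q).edges} \ {s(a, b)}) := by
  have hab : s(a, b) ∉ Q.edges := ((cons_isCycle_iff _ _).mp hC).2
  ext e
  simp only [Set.mem_ofPred_eq, Set.mem_union, Set.mem_sdiff, Set.mem_singleton_iff, edges_append,
    edges_cons, List.mem_append, List.mem_cons]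
  grind

end Splice

end SimpleGraph.Walk

open SimpleGraph.Walk in
/-- One iteration of the Expansion Algorithm: replacing an edge `e = s(u,v)` of a cycle `C`
by a path `P` from `u` to `v` of length at least 2 whose internal vertices avoid `C`
yields again a cycle, with vertex set `V(C) ∪ V(P)` and edge set `E(P) ∪ (E(C) \ {e})`. -/
theorem expansion_step_is_cycle {V : Type*} (G : SimpleGraph V) {x u v : V}
    (C : G.Walk x x) (hC : C.IsCycle) (he : s(u, v) ∈ C.edges)
    (P : G.Walk u v) (hP : P.IsPath) (hlen : 2 ≤ P.length)
    (hint : ∀ w ∈ P.support, w ≠ u → w ≠ v → w ∉ C.support) :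
    ∃ (y : V) (C' : G.Walk y y), C'.IsCycle ∧
      {a | a ∈ C'.support} = {a | a ∈ C.support} ∪ {a | a ∈ P.support} ∧
      {e' | e' ∈ C'.edges} = {e' | e' ∈ P.edges} ∪ ({e' | e' ∈ C.edges} \ {s(u, v)}) := by
  obtain ⟨h, Q, hcyc, hsupp, hedges⟩ := hC.exists_cons_of_mem_edges he
  have hcommon : ∀ w ∈ P.support, w ∈ Q.support → w = u ∨ w = v := fun w hwP hwQ => by
    by_contra! hw
    exact hint w hwP hw.1 hw.2 (hsupp.subset (List.mem_cons_of_mem u hwQ))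
  refine ⟨u, P.append Q, hP.isCycle_append_of_isCycle_cons hcyc hlen hcommon, ?_, ?_⟩
  · rw [← hsupp, setOf_mem_support_append_eq h]
  · rw [← hedges, setOf_mem_edges_append_eq hcyc]
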